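/- arXiv:2302.01289 — 2 statements merged into one kernel-verified Lean document; each statement's English description precedes it below -/
import Mathlib

section
/- Let γ > 1 and α = (γ−1)/2, let J ⊆ ℝ be an interval, and suppose a, b, c, k : ℝ × J → ℝ are C¹, 2π-periodic in the first variable θ, and satisfy: (∂_t + b∂_θ)a + a² − b² + α c² = 0; (∂_t + b∂_θ)b + α c ∂_θc + 2ab = (α/(2γ)) c² ∂_θk; (∂_t + b∂_θ)c + α c ∂_θb + γ a c = 0; (∂_t + b∂_θ)k = 0. Then the functions u_r(r,θ,t) := r·a(θ,t), u_θ(r,θ,t) := r·b(θ,t), σ(r,θ,t) := r·c(θ,t), S(r,θ,t) := k(θ,t) solve, for all r > 0, θ ∈ ℝ, t ∈ J, the 2D Euler equations in polar coordinates: (∂_t + u_r∂_r + (1/r)u_θ∂_θ)u_r − (1/r)u_θ² + α σ ∂_rσ = (α/(2γ)) σ² ∂_rS; (∂_t + u_r∂_r + (1/r)u_θ∂_θ)u_θ + (1/r)u_r u_θ + α(σ/r)∂_θσ = (α/(2γ))(σ²/r)∂_θS; (∂_t + u_r∂_r + (1/r)u_θ∂_θ)σ + α σ((1/r)u_r + ∂_ru_r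 + (1/r)∂_θu_θ) = 0; (∂_t + u_r∂_r + (1/r)u_θ∂_θ)S = 0. -/
open Real Set

noncomputable section

/-- Partial derivative in the spatial variable of a function of `(θ, t)`. -/
def pdx (f : ℝ → ℝ → ℝ) (x t : ℝ) : ℝ := deriv (fun y => f y t) x

/-- Partial derivative in the time variable of a function of `(θ, t)`. -/
def pdt (f : ℝ → ℝ → ℝ) (x t : ℝ) : ℝ := deriv (fun s => f x s) t

/-- Partial derivative in the first (radial) variable of a function of `(r, θ, t)`. -/
def d1 (f : ℝ → ℝ → ℝ → ℝ) (r θ t : ℝ) : ℝ := deriv (fun s => f s θ t) r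

/-- Partial derivative in the second (angular) variable. -/
def d2 (f : ℝ → ℝ → ℝ → ℝ) (r θ t : ℝ) : ℝ := deriv (fun s => f r s t) θ

/-- Partial derivative in time. -/
def dt (f : ℝ → ℝ → ℝ → ℝ) (r θ t : ℝ) : ℝ := deriv (fun s => f r θ s) t

/-! The ansatz is homogeneous of degree one in `r` for `u_r, u_θ, σ` and of degree zero for `S`,
so `∂_r` sends `r f` to `f` while `∂_θ` and `∂_t` commute with the factor `r`. After these
substitutions each polar equation is a multiple of the corresponding reduced equation; the
continuity equation also needs `1 + 2α = γ`. -/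

section RadialAnsatz

variable (g : ℝ → ℝ → ℝ) (r θ t : ℝ)

lemma d1_radius_mul : d1 (fun r θ t => r * g θ t) r θ t = g θ t := by
  simp [d1]

lemma d2_radius_mul : d2 (fun r θ t => r * g θ t) r θ t = r * pdx g θ t :=
  deriv_const_mul_field r

lemma dt_radius_mul : dt (fun r θ t => r * g θ t) r θ t = r * pdt g θ t :=
  deriv_const_mul_field r

lemma d1_radius_indep : d1 (fun _ θ t => g θ t) r θ t = 0 :=
  deriv_const r _

lemma d2_radius_indep : d2 (fun _ θ t => g θ t) r θ t = pdx g θ t := rfl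

lemma dt_radius_indep : dt (fun _ θ t => g θ t) r θ t = pdt g θ t := rfl

end RadialAnsatz

theorem azimuthal_ansatz_solves_polar_euler_general
    (γ α : ℝ) (hα : α = (γ - 1) / 2)
    (J : Set ℝ)
    (a b c k : ℝ → ℝ → ℝ)
    -- the reduced azimuthal system
    (heq1 : ∀ θ : ℝ, ∀ t ∈ J,
      pdt a θ t + b θ t * pdx a θ t + a θ t ^ 2 - b θ t ^ 2 + α * c θ t ^ 2 = 0)
    (heq2 : ∀ θ : ℝ, ∀ t ∈ J,
      pdt b θ t + b θ t * pdx b θ t + α * c θ t * pdx c θ t + 2 * a θ t * b θ t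
        = α / (2 * γ) * c θ t ^ 2 * pdx k θ t)
    (heq3 : ∀ θ : ℝ, ∀ t ∈ J,
      pdt c θ t + b θ t * pdx c θ t + α * c θ t * pdx b θ t + γ * a θ t * c θ t = 0)
    (heq4 : ∀ θ : ℝ, ∀ t ∈ J, pdt k θ t + b θ t * pdx k θ t = 0)
    -- the azimuthal-symmetry fields
    (ur uθ σ S : ℝ → ℝ → ℝ → ℝ)
    (hur : ∀ r θ t : ℝ, ur r θ t = r * a θ t)
    (huθ : ∀ r θ t : ℝ, uθ r θ t = r * b θ t)
    (hσ : ∀ r θ t : ℝ, σ r θ t = r * c θ t)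
    (hS : ∀ r θ t : ℝ, S r θ t = k θ t) :
    ∀ r θ : ℝ, 0 < r → ∀ t ∈ J,
      (dt ur r θ t + ur r θ t * d1 ur r θ t + 1 / r * uθ r θ t * d2 ur r θ t
          - 1 / r * uθ r θ t ^ 2 + α * σ r θ t * d1 σ r θ t
        = α / (2 * γ) * σ r θ t ^ 2 * d1 S r θ t) ∧
      (dt uθ r θ t + ur r θ t * d1 uθ r θ t + 1 / r * uθ r θ t * d2 uθ r θ t
          + 1 / r * ur r θ t * uθ r θ t + α * (σ r θ t / r) * d2 σ r θ t
        = α / (2 * γ) * (σ r θ t ^ 2 / r) * d2 S r θ t) ∧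
      (dt σ r θ t + ur r θ t * d1 σ r θ t + 1 / r * uθ r θ t * d2 σ r θ t
          + α * σ r θ t * (1 / r * ur r θ t + d1 ur r θ t + 1 / r * d2 uθ r θ t) = 0) ∧
      (dt S r θ t + ur r θ t * d1 S r θ t + 1 / r * uθ r θ t * d2 S r θ t = 0) := by
  obtain rfl : ur = fun r θ t => r * a θ t := funext fun r => funext fun θ => funext (hur r θ)
  obtain rfl : uθ = fun r θ t => r * b θ t := funext fun r => funext fun θ => funext (huθ r θ)
  obtain rfl : σ = fun r θ t => r * c θ t := funext fun r => funext fun θ => funext (hσ r θ)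
  obtain rfl : S = fun _ θ t => k θ t := funext fun r => funext fun θ => funext (hS r θ)
  intro r θ hr t ht
  simp only [d1_radius_mul, d2_radius_mul, dt_radius_mul, d1_radius_indep,
    d2_radius_indep, dt_radius_indep]
  refine ⟨?_, ?_, ?_, ?_⟩ <;> field_simp
  · linear_combination 2 * heq1 θ t ht
  · linear_combination 2 * heq2 θ t ht
  · linear_combination r * heq3 θ t ht + 2 * r * a θ t * c θ t * hα
  · linear_combination heq4 θ t ht

/-- The azimuthal-symmetry ansatz `u_r = r a(θ,t)`, `u_θ = r b(θ,t)`,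
`σ = r c(θ,t)`, `S = k(θ,t)` turns solutions of the reduced system into solutions of the
2D Euler equations in polar coordinates. -/
theorem azimuthal_ansatz_solves_polar_euler
    (γ α : ℝ) (hγ : 1 < γ) (hα : α = (γ - 1) / 2)
    (J : Set ℝ) (hJ : J.OrdConnected)
    (a b c k : ℝ → ℝ → ℝ)
    (ha : ContDiffOn ℝ 1 (fun p : ℝ × ℝ => a p.1 p.2) (univ ×ˢ J))
    (hb : ContDiffOn ℝ 1 (fun p : ℝ × ℝ => b p.1 p.2) (univ ×ˢ J))
    (hc : ContDiffOn ℝ 1 (fun p : ℝ × ℝ => c p.1 p.2) (univ ×ˢ J))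
    (hk : ContDiffOn ℝ 1 (fun p : ℝ × ℝ => k p.1 p.2) (univ ×ˢ J))
    (hapera : ∀ θ t : ℝ, a (θ + 2 * π) t = a θ t)
    (hbper : ∀ θ t : ℝ, b (θ + 2 * π) t = b θ t)
    (hcper : ∀ θ t : ℝ, c (θ + 2 * π) t = c θ t)
    (hkper : ∀ θ t : ℝ, k (θ + 2 * π) t = k θ t)
    -- the reduced azimuthal system
    (heq1 : ∀ θ : ℝ, ∀ t ∈ J,
      pdt a θ t + b θ t * pdx a θ t + a θ t ^ 2 - b θ t ^ 2 + α * c θ t ^ 2 = 0)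
    (heq2 : ∀ θ : ℝ, ∀ t ∈ J,
      pdt b θ t + b θ t * pdx b θ t + α * c θ t * pdx c θ t + 2 * a θ t * b θ t
        = α / (2 * γ) * c θ t ^ 2 * pdx k θ t)
    (heq3 : ∀ θ : ℝ, ∀ t ∈ J,
      pdt c θ t + b θ t * pdx c θ t + α * c θ t * pdx b θ t + γ * a θ t * c θ t = 0)
    (heq4 : ∀ θ : ℝ, ∀ t ∈ J, pdt k θ t + b θ t * pdx k θ t = 0)
    -- the azimuthal-symmetry fields
    (ur uθ σ S : ℝ → ℝ → ℝ → ℝ)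
    (hur : ∀ r θ t : ℝ, ur r θ t = r * a θ t)
    (huθ : ∀ r θ t : ℝ, uθ r θ t = r * b θ t)
    (hσ : ∀ r θ t : ℝ, σ r θ t = r * c θ t)
    (hS : ∀ r θ t : ℝ, S r θ t = k θ t) :
    ∀ r θ : ℝ, 0 < r → ∀ t ∈ J,
      (dt ur r θ t + ur r θ t * d1 ur r θ t + 1 / r * uθ r θ t * d2 ur r θ t
          - 1 / r * uθ r θ t ^ 2 + α * σ r θ t * d1 σ r θ t
        = α / (2 * γ) * σ r θ t ^ 2 * d1 S r θ t) ∧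
      (dt uθ r θ t + ur r θ t * d1 uθ r θ t + 1 / r * uθ r θ t * d2 uθ r θ t
          + 1 / r * ur r θ t * uθ r θ t + α * (σ r θ t / r) * d2 σ r θ t
        = α / (2 * γ) * (σ r θ t ^ 2 / r) * d2 S r θ t) ∧
      (dt σ r θ t + ur r θ t * d1 σ r θ t + 1 / r * uθ r θ t * d2 σ r θ t
          + α * σ r θ t * (1 / r * ur r θ t + d1 ur r θ t + 1 / r * d2 uθ r θ t) = 0) ∧
      (dt S r θ t + ur r θ t * d1 S r θ t + 1 / r * uθ r θ t * d2 S r θ t = 0) :=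
  azimuthal_ansatz_solves_polar_euler_general γ α hα J a b c k heq1 heq2 heq3 heq4 ur uθ σ S hur huθ
    hσ hS
end
end

section
/- Let (w, z, k, a) be a C¹ solution of the azimuthal Euler system on 𝕋 × [−ε, T) with c := (w−z)/2 > 0 everywhere, let φ > 0, and let Ψ be the flow of λ := (1−φ)w + (1/3+φ)z, assumed C¹ in the label x. Then for all (x,t) ∈ 𝕋 × [−ε, T): ∂_xΨ(x,t) = (c₀(x)/c(Ψ(x,t),t))^{(1−φ)/φ} · exp( ∫_{−ε}^{t} [ (2 − 2/(3φ)) ∂_θz − (8(1−φ)/(3φ)) a ](Ψ(x,τ),τ) dτ ), where c₀ := c(·, −ε). -/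
open Real Set

noncomputable section

/-- The three wave speeds of the azimuthal Euler system. -/
def lam1 (w z : ℝ) : ℝ := w / 3 + z
def lam2 (w z : ℝ) : ℝ := 2 / 3 * (w + z)
def lam3 (w z : ℝ) : ℝ := w + z / 3

/-- The azimuthal Euler system (γ = 2, rescaled time) at a point. -/
def EulerEq (w z k a : ℝ → ℝ → ℝ) (θ t : ℝ) : Prop :=
  pdt w θ t + lam3 (w θ t) (z θ t) * pdx w θ t
      = -(8 / 3) * a θ t * w θ t + 1 / 24 * (w θ t - z θ t) ^ 2 * pdx k θ t ∧
  pdt z θ t + lam1 (w θ t) (z θ t) * pdx z θ t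
      = -(8 / 3) * a θ t * z θ t + 1 / 24 * (w θ t - z θ t) ^ 2 * pdx k θ t ∧
  pdt k θ t + lam2 (w θ t) (z θ t) * pdx k θ t = 0 ∧
  pdt a θ t + lam2 (w θ t) (z θ t) * pdx a θ t
      = -(4 / 3) * a θ t ^ 2 + 1 / 3 * (w θ t + z θ t) ^ 2 - 1 / 6 * (w θ t - z θ t) ^ 2

/-- The flow of a speed field, started at time `−ε`. -/
def IsFlowOn (speed Ψ : ℝ → ℝ → ℝ) (ε : ℝ) (J : Set ℝ) : Prop :=
  (∀ x, Ψ x (-ε) = x) ∧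
  ∀ x : ℝ, ∀ t ∈ J, HasDerivWithinAt (fun s => Ψ x s) (speed (Ψ x t) t) J t

/-!
Write `λ = (1 - φ) w + (1/3 + φ) z` and `c = (w - z)/2`. Since `λ` is `C¹` and (by periodicity)
globally Lipschitz in `θ`, its flow satisfies Liouville's formula
`∂_x Ψ(x, t) = exp ∫_{-ε}^t ∂_θ λ(Ψ(x, τ), τ) dτ`: differentiating `Ψ = x + ∫ λ(Ψ, τ) dτ` under the
integral sign gives `∂_x Ψ = 1 + ∫ ∂_θ λ · ∂_x Ψ`, whose only solution is that exponential.
Along a characteristic of `λ` the equations for `w` and `z` turn `∂_θ λ` into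
`(2 - 2/(3φ)) ∂_θ z - 8(1-φ)/(3φ) a - ((1-φ)/φ) d/dτ log c(Ψ, τ)`, and integrating the last term
produces the factor `(c₀ / c)^((1-φ)/φ)`.
-/
open Topology Filter MeasureTheory

section Strip

variable {f : ℝ → ℝ → ℝ} {a b : ℝ}

theorem hasDerivAt_pdx (hf : ContDiffOn ℝ 1 (fun p : ℝ × ℝ => f p.1 p.2) (univ ×ˢ Ico a b))
    (θ : ℝ) {s : ℝ} (hs : s ∈ Ico a b) : HasDerivAt (fun y => f y s) (pdx f θ s) θ := by
  have hmaps : MapsTo (fun y : ℝ => ((y, s) : ℝ × ℝ)) univ (univ ×ˢ Ico a b) :=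
    fun y _ => ⟨mem_univ y, hs⟩
  have hslice : DifferentiableWithinAt ℝ (fun y => f y s) univ θ :=
    ((hf.differentiableOn one_ne_zero) (θ, s) ⟨mem_univ θ, hs⟩).comp θ
      (differentiableAt_id.prodMk (differentiableAt_const s)).differentiableWithinAt hmaps
  exact (differentiableWithinAt_univ.1 hslice).hasDerivAt

theorem pdx_eq_fderivWithin_apply
    (hf : ContDiffOn ℝ 1 (fun p : ℝ × ℝ => f p.1 p.2) (univ ×ˢ Ico a b)) {θ s : ℝ}
    (hs : s ∈ Ico a b) :
    pdx f θ s = fderivWithin ℝ (fun p : ℝ × ℝ => f p.1 p.2) (univ ×ˢ Ico a b) (θ, s) (1, 0) := by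
  have hcurve : HasDerivAt (fun y : ℝ => ((y, s) : ℝ × ℝ)) (1, 0) θ :=
    (hasDerivAt_id θ).prodMk (hasDerivAt_const θ s)
  have hmaps : MapsTo (fun y : ℝ => ((y, s) : ℝ × ℝ)) univ (univ ×ˢ Ico a b) :=
    fun y _ => ⟨mem_univ y, hs⟩
  have := ((hf.differentiableOn one_ne_zero) (θ, s) ⟨mem_univ θ, hs⟩).hasFDerivWithinAt
    |>.comp_hasDerivWithinAt θ hcurve.hasDerivWithinAt hmaps
  exact (hasDerivWithinAt_univ.1 this).deriv

theorem continuousOn_pdx (hf : ContDiffOn ℝ 1 (fun p : ℝ × ℝ => f p.1 p.2) (univ ×ˢ Ico a b)) :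
    ContinuousOn (fun p : ℝ × ℝ => pdx f p.1 p.2) (univ ×ˢ Ico a b) := by
  have hfderiv := hf.continuousOn_fderivWithin (uniqueDiffOn_univ.prod (uniqueDiffOn_Ico a b))
    le_rfl
  exact ((ContinuousLinearMap.apply ℝ ℝ ((1 : ℝ), (0 : ℝ))).continuous.comp_continuousOn
    hfderiv).congr fun p hp => pdx_eq_fderivWithin_apply hf hp.2

theorem hasDerivAt_comp_curve
    (hf : ContDiffOn ℝ 1 (fun p : ℝ × ℝ => f p.1 p.2) (univ ×ˢ Ico a b)) {s : ℝ}
    (hs : s ∈ Ioo a b) {γ : ℝ → ℝ} {γ' : ℝ} (hγ : HasDerivAt γ γ' s) :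
    HasDerivAt (fun τ => f (γ τ) τ) (γ' * pdx f (γ s) s + pdt f (γ s) s) s := by
  have hnhds : univ ×ˢ Ico a b ∈ 𝓝 ((γ s, s) : ℝ × ℝ) :=
    prod_mem_nhds univ_mem (Ico_mem_nhds hs.1 hs.2)
  have hF := ((hf.contDiffAt hnhds).differentiableAt one_ne_zero).hasFDerivAt
  set F := fderiv ℝ (fun p : ℝ × ℝ => f p.1 p.2) (γ s, s)
  have hpdx : pdx f (γ s) s = F (1, 0) :=
    (hF.comp_hasDerivAt_of_eq (γ s) ((hasDerivAt_id (γ s)).prodMk (hasDerivAt_const (γ s) s))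
      rfl).deriv
  have hpdt : pdt f (γ s) s = F (0, 1) :=
    (hF.comp_hasDerivAt_of_eq s ((hasDerivAt_const s (γ s)).prodMk (hasDerivAt_id s))
      rfl).deriv
  have hsplit : ((γ', 1) : ℝ × ℝ) = γ' • ((1, 0) : ℝ × ℝ) + (0, 1) := by simp
  have := hF.comp_hasDerivAt_of_eq s (hγ.prodMk (hasDerivAt_id s)) rfl
  rwa [hsplit, map_add, map_smul, smul_eq_mul, ← hpdx, ← hpdt] at this

theorem exists_abs_pdx_le_of_periodic
    (hf : ContDiffOn ℝ 1 (fun p : ℝ × ℝ => f p.1 p.2) (univ ×ˢ Ico a b)) {p : ℝ} (hp : 0 < p)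
    (hper : ∀ θ s, f (θ + p) s = f θ s) {t : ℝ} (htb : t < b) :
    ∃ L, ∀ θ, ∀ s ∈ Icc a t, |pdx f θ s| ≤ L := by
  have hK : Icc 0 p ×ˢ Icc a t ⊆ univ ×ˢ Ico a b :=
    prod_mono (subset_univ _) fun s hs => ⟨hs.1, hs.2.trans_lt htb⟩
  obtain ⟨L, hL⟩ := (isCompact_Icc.prod isCompact_Icc).exists_bound_of_continuousOn
    ((continuousOn_pdx hf).mono hK)
  refine ⟨L, fun θ s hs => ?_⟩
  have hperiodic : Function.Periodic (fun y => pdx f y s) p := fun y => by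
    simp only [pdx, ← deriv_comp_add_const, hper]
  obtain ⟨y, hy, hθy⟩ := hperiodic.exists_mem_Ico₀ hp θ
  rw [hθy]
  exact hL (y, s) ⟨Ico_subset_Icc_self hy, hs⟩

theorem abs_sub_le_of_abs_pdx_le
    (hf : ContDiffOn ℝ 1 (fun p : ℝ × ℝ => f p.1 p.2) (univ ×ˢ Ico a b)) {s L : ℝ}
    (hs : s ∈ Ico a b) (hL : ∀ θ, |pdx f θ s| ≤ L) (θ₁ θ₂ : ℝ) :
    |f θ₁ s - f θ₂ s| ≤ L * |θ₁ - θ₂| :=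
  convex_univ.norm_image_sub_le_of_norm_deriv_le
    (fun θ _ => (hasDerivAt_pdx hf θ hs).differentiableAt) (fun θ _ => hL θ)
    (mem_univ θ₂) (mem_univ θ₁)

end Strip

theorem hasDerivAt_integral_of_continuousOn {g : ℝ → ℝ} {a t u : ℝ}
    (hg : ContinuousOn g (Icc a t)) (hu : u ∈ Ioo a t) :
    HasDerivAt (fun v => ∫ s in a..v, g s) (g u) u :=
  intervalIntegral.integral_hasDerivAt_right
    ((hg.mono (Icc_subset_Icc le_rfl hu.2.le)).intervalIntegrable_of_Icc hu.1.le)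
    ((hg.mono Ioo_subset_Icc_self).stronglyMeasurableAtFilter isOpen_Ioo u hu)
    (hg.continuousAt (Icc_mem_nhds hu.1 hu.2))

theorem continuousOn_primitive_Icc {g : ℝ → ℝ} {a t : ℝ} (hat : a ≤ t)
    (hg : IntegrableOn g (Icc a t)) : ContinuousOn (fun u => ∫ s in a..u, g s) (Icc a t) := by
  rw [← uIcc_of_le hat] at hg ⊢
  exact intervalIntegral.continuousOn_primitive_interval hg

theorem eq_exp_integral_of_eq_one_add_integral {m J : ℝ → ℝ} {a t : ℝ} (hat : a ≤ t)
    (hm : ContinuousOn m (Icc a t)) (hmJ : IntegrableOn (fun s => m s * J s) (Icc a t))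
    (hJ : ∀ u ∈ Icc a t, J u = 1 + ∫ s in a..u, m s * J s) :
    J t = exp (∫ s in a..t, m s) := by
  set M := fun u => ∫ s in a..u, m s
  have hJc : ContinuousOn J (Icc a t) :=
    (continuousOn_const.add (continuousOn_primitive_Icc hat hmJ)).congr hJ
  have hDc : ContinuousOn (fun u => J u * exp (-M u)) (Icc a t) :=
    hJc.mul (continuousOn_primitive_Icc hat hm.integrableOn_Icc).neg.rexp
  have hD' : ∀ u ∈ Ioo a t, HasDerivAt (fun u => J u * exp (-M u)) 0 u := by
    intro u hu
    have hJ' : HasDerivAt J (m u * J u) u :=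
      ((hasDerivAt_integral_of_continuousOn (hm.mul hJc) hu).const_add 1).congr_of_eventuallyEq
        (eventually_of_mem (Icc_mem_nhds hu.1 hu.2) hJ)
    have hM : HasDerivAt (fun v => -M v) (-m u) u :=
      (hasDerivAt_integral_of_continuousOn hm hu).neg
    have hD := hJ'.mul hM.exp
    rwa [show m u * J u * exp (-M u) + J u * (exp (-M u) * -m u) = 0 by ring] at hD
  have hconst := intervalIntegral.integral_eq_sub_of_hasDerivAt_of_le hat hDc hD'
    intervalIntegrable_const
  have hJa : J a = 1 := by simpa using hJ a (left_mem_Icc.2 hat)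
  simp only [intervalIntegral.integral_zero, M, intervalIntegral.integral_same, hJa, neg_zero,
    exp_zero, mul_one] at hconst
  rw [← mul_inv_eq_one₀ (exp_ne_zero _), ← exp_neg]
  linarith

theorem aestronglyMeasurable_pdx {F : ℝ → ℝ → ℝ} {x : ℝ} {S : Set ℝ} (hS : MeasurableSet S)
    (hcont : ∀ y, ContinuousOn (F y) S) (hdiff : ∀ s ∈ S, DifferentiableAt ℝ (fun y => F y s) x) :
    AEStronglyMeasurable (fun s => pdx F x s) (volume.restrict S) := by
  have hseq : Tendsto (fun n : ℕ => x + 1 / ((n : ℝ) + 1)) atTop (𝓝[≠] x) :=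
    tendsto_nhdsWithin_of_tendsto_nhds_of_eventually_within _
      (by simpa using tendsto_one_div_add_atTop_nhds_zero_nat.const_add x)
      (Eventually.of_forall fun n => by simp; positivity)
  refine aestronglyMeasurable_of_tendsto_ae atTop
    (f := fun (n : ℕ) s => slope (fun y => F y s) x (x + 1 / ((n : ℝ) + 1))) (fun n => ?_) ?_
  · simp only [slope_def_field]
    exact (((hcont _).sub (hcont x)).div_const _).aestronglyMeasurable hS
  · exact ae_restrict_of_forall_mem hS fun s hs =>
      (hasDerivAt_iff_tendsto_slope.1 (hdiff s hs).hasDerivAt).comp hseq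

section Flow

variable {speed Ψ : ℝ → ℝ → ℝ} {ε b t L : ℝ}

theorem IsFlowOn.continuousOn {J : Set ℝ} (hΨ : IsFlowOn speed Ψ ε J) (x : ℝ) :
    ContinuousOn (fun s => Ψ x s) J :=
  fun s hs => (hΨ.2 x s hs).continuousWithinAt

theorem IsFlowOn.continuousOn_comp {J : Set ℝ} (hΨ : IsFlowOn speed Ψ ε J) {g : ℝ → ℝ → ℝ}
    (hg : ContinuousOn (fun p : ℝ × ℝ => g p.1 p.2) (univ ×ˢ J)) (x : ℝ) :
    ContinuousOn (fun s => g (Ψ x s) s) J :=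
  hg.comp ((hΨ.continuousOn x).prodMk continuousOn_id) fun _ hs => ⟨mem_univ _, hs⟩

theorem IsFlowOn.hasDerivAt {J : Set ℝ} (hΨ : IsFlowOn speed Ψ ε J) (x : ℝ) {s : ℝ}
    (hs : J ∈ 𝓝 s) : HasDerivAt (fun r => Ψ x r) (speed (Ψ x s) s) s :=
  (hΨ.2 x s (mem_of_mem_nhds hs)).hasDerivAt hs

theorem IsFlowOn.abs_sub_le (hΨ : IsFlowOn speed Ψ ε (Ico (-ε) b)) (htb : t < b)
    (hlip : ∀ s ∈ Icc (-ε) t, ∀ θ₁ θ₂, |speed θ₁ s - speed θ₂ s| ≤ L * |θ₁ - θ₂|)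
    (x₁ x₂ : ℝ) {s : ℝ} (hs : s ∈ Icc (-ε) t) :
    |Ψ x₁ s - Ψ x₂ s| ≤ |x₁ - x₂| * exp (L * (s + ε)) := by
  have hsub : Icc (-ε) t ⊆ Ico (-ε) b := fun r hr => ⟨hr.1, hr.2.trans_lt htb⟩
  have hderiv : ∀ r ∈ Ico (-ε) t, HasDerivWithinAt (fun r => Ψ x₁ r - Ψ x₂ r)
      (speed (Ψ x₁ r) r - speed (Ψ x₂ r) r) (Ici r) r := fun r hr =>
    ((hΨ.2 x₁ r (hsub (Ico_subset_Icc_self hr))).sub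
      (hΨ.2 x₂ r (hsub (Ico_subset_Icc_self hr)))).mono_of_mem_nhdsWithin
      (mem_of_superset (Ico_mem_nhdsGE (hr.2.trans htb)) (Ico_subset_Ico_left hr.1))
  have := norm_le_gronwallBound_of_norm_deriv_right_le (δ := |x₁ - x₂|) (K := L) (ε := 0)
    (((hΨ.continuousOn x₁).sub (hΨ.continuousOn x₂)).mono hsub) hderiv (by simp [hΨ.1])
    (fun r hr => by simpa using hlip r (Ico_subset_Icc_self hr) _ _) s hs
  simpa [gronwallBound_ε0, sub_neg_eq_add] using this

theorem IsFlowOn.abs_pdx_le (hΨ : IsFlowOn speed Ψ ε (Ico (-ε) b)) (htb : t < b)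
    (hlip : ∀ s ∈ Icc (-ε) t, ∀ θ₁ θ₂, |speed θ₁ s - speed θ₂ s| ≤ L * |θ₁ - θ₂|)
    (hL : 0 ≤ L) {y s : ℝ} (hs : s ∈ Icc (-ε) t)
    (hdiff : DifferentiableAt ℝ (fun y => Ψ y s) y) :
    |pdx Ψ y s| ≤ exp (L * (t + ε)) := by
  have hgrowth : exp (L * (s + ε)) ≤ exp (L * (t + ε)) := by
    gcongr
    exact hs.2
  refine hdiff.hasDerivAt.le_of_lip' (exp_pos _).le (Eventually.of_forall fun y' => ?_)
  calc |Ψ y' s - Ψ y s| ≤ |y' - y| * exp (L * (s + ε)) := hΨ.abs_sub_le htb hlip y' y hs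
    _ ≤ exp (L * (t + ε)) * |y' - y| := by rw [mul_comm]; gcongr

theorem IsFlowOn.eq_add_integral (hΨ : IsFlowOn speed Ψ ε (Ico (-ε) b))
    (hsp : ContinuousOn (fun p : ℝ × ℝ => speed p.1 p.2) (univ ×ˢ Ico (-ε) b)) (y : ℝ) {u : ℝ}
    (hu : u ∈ Ico (-ε) b) : Ψ y u = y + ∫ s in (-ε)..u, speed (Ψ y s) s := by
  have hsub : Icc (-ε) u ⊆ Ico (-ε) b := fun r hr => ⟨hr.1, hr.2.trans_lt hu.2⟩
  rw [intervalIntegral.integral_eq_sub_of_hasDerivAt_of_le hu.1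
    ((hΨ.continuousOn y).mono hsub)
    (fun s hs => hΨ.hasDerivAt y (Ico_mem_nhds hs.1 (hs.2.trans hu.2)))
    (((hΨ.continuousOn_comp hsp y).mono hsub).intervalIntegrable_of_Icc hu.1), hΨ.1]
  ring

theorem IsFlowOn.integrableOn_pdx_speed_mul_pdx (hΨ : IsFlowOn speed Ψ ε (Ico (-ε) b))
    (hsp : ContDiffOn ℝ 1 (fun p : ℝ × ℝ => speed p.1 p.2) (univ ×ˢ Ico (-ε) b))
    (ht : t ∈ Ico (-ε) b) (hbound : ∀ θ, ∀ s ∈ Icc (-ε) t, |pdx speed θ s| ≤ L)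
    (hΨx : ∀ y, ∀ s ∈ Ico (-ε) b, DifferentiableAt ℝ (fun y => Ψ y s) y) (x : ℝ) :
    IntegrableOn (fun s => pdx speed (Ψ x s) s * pdx Ψ x s) (Icc (-ε) t) := by
  have hsub : Icc (-ε) t ⊆ Ico (-ε) b := fun r hr => ⟨hr.1, hr.2.trans_lt ht.2⟩
  have hL : 0 ≤ L := (abs_nonneg _).trans (hbound 0 (-ε) (left_mem_Icc.2 ht.1))
  have hlip : ∀ s ∈ Icc (-ε) t, ∀ θ₁ θ₂, |speed θ₁ s - speed θ₂ s| ≤ L * |θ₁ - θ₂| :=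
    fun s hs => abs_sub_le_of_abs_pdx_le hsp (hsub hs) fun θ => hbound θ s hs
  have hmeas : AEStronglyMeasurable (fun s => pdx speed (Ψ x s) s * pdx Ψ x s)
      (volume.restrict (Icc (-ε) t)) :=
    (((hΨ.continuousOn_comp (continuousOn_pdx hsp) x).mono hsub).aestronglyMeasurable
      measurableSet_Icc).mul
    (aestronglyMeasurable_pdx measurableSet_Icc (fun y => (hΨ.continuousOn y).mono hsub)
      fun s hs => hΨx x s (hsub hs))
  refine Integrable.mono' (integrable_const (L * exp (L * (t + ε)))) hmeas
    (ae_restrict_of_forall_mem measurableSet_Icc fun s hs => ?_)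
  rw [norm_mul, Real.norm_eq_abs, Real.norm_eq_abs]
  exact mul_le_mul (hbound _ s hs) (hΨ.abs_pdx_le ht.2 hlip hL hs (hΨx x s (hsub hs)))
    (abs_nonneg _) hL

/-- Differentiate `Ψ y t = y + ∫ speed (Ψ y s) s` under the integral sign; the Grönwall bound on
`pdx Ψ` supplies the dominating function. -/
theorem IsFlowOn.pdx_eq_one_add_integral (hΨ : IsFlowOn speed Ψ ε (Ico (-ε) b))
    (hsp : ContDiffOn ℝ 1 (fun p : ℝ × ℝ => speed p.1 p.2) (univ ×ˢ Ico (-ε) b))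
    (ht : t ∈ Ico (-ε) b) (hbound : ∀ θ, ∀ s ∈ Icc (-ε) t, |pdx speed θ s| ≤ L)
    (hΨx : ∀ y, ∀ s ∈ Ico (-ε) b, DifferentiableAt ℝ (fun y => Ψ y s) y) (x : ℝ) :
    pdx Ψ x t = 1 + ∫ s in (-ε)..t, pdx speed (Ψ x s) s * pdx Ψ x s := by
  have hsub : Icc (-ε) t ⊆ Ico (-ε) b := fun r hr => ⟨hr.1, hr.2.trans_lt ht.2⟩
  have hIoc : uIoc (-ε) t ⊆ Icc (-ε) t := by
    rw [uIoc_of_le ht.1]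
    exact Ioc_subset_Icc_self
  have hL : 0 ≤ L := (abs_nonneg _).trans (hbound 0 (-ε) (left_mem_Icc.2 ht.1))
  have hlip : ∀ s ∈ Icc (-ε) t, ∀ θ₁ θ₂, |speed θ₁ s - speed θ₂ s| ≤ L * |θ₁ - θ₂| :=
    fun s hs => abs_sub_le_of_abs_pdx_le hsp (hsub hs) fun θ => hbound θ s hs
  obtain ⟨-, hderiv⟩ := intervalIntegral.hasDerivAt_integral_of_dominated_loc_of_deriv_le
    (μ := volume) (F := fun y s => speed (Ψ y s) s)
    (F' := fun y s => pdx speed (Ψ y s) s * pdx Ψ y s) (x₀ := x)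
    (bound := fun _ => L * exp (L * (t + ε))) univ_mem
    (Eventually.of_forall fun y => ((hΨ.continuousOn_comp hsp.continuousOn y).mono
      (hIoc.trans hsub)).aestronglyMeasurable measurableSet_uIoc)
    (((hΨ.continuousOn_comp hsp.continuousOn x).mono hsub).intervalIntegrable_of_Icc ht.1)
    ((hΨ.integrableOn_pdx_speed_mul_pdx hsp ht hbound hΨx x).mono_set hIoc).aestronglyMeasurable
    (Eventually.of_forall fun s hs y _ => by
      rw [norm_mul, Real.norm_eq_abs, Real.norm_eq_abs]
      exact mul_le_mul (hbound _ s (hIoc hs))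
        (hΨ.abs_pdx_le ht.2 hlip hL (hIoc hs) (hΨx y s (hsub (hIoc hs)))) (abs_nonneg _) hL)
    intervalIntegrable_const
    (Eventually.of_forall fun s hs y _ => by
      have := (hasDerivAt_pdx hsp (Ψ y s) (hsub (hIoc hs))).comp y
        (hΨx y s (hsub (hIoc hs))).hasDerivAt
      exact this)
  have hrepr : (fun y => Ψ y t) = fun y => y + ∫ s in (-ε)..t, speed (Ψ y s) s :=
    funext fun y => hΨ.eq_add_integral hsp.continuousOn y ht
  rw [pdx, hrepr]
  exact ((hasDerivAt_id x).add hderiv).deriv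

theorem IsFlowOn.pdx_eq_exp_integral (hΨ : IsFlowOn speed Ψ ε (Ico (-ε) b))
    (hsp : ContDiffOn ℝ 1 (fun p : ℝ × ℝ => speed p.1 p.2) (univ ×ˢ Ico (-ε) b))
    (ht : t ∈ Ico (-ε) b) (hbound : ∀ θ, ∀ s ∈ Icc (-ε) t, |pdx speed θ s| ≤ L)
    (hΨx : ∀ y, ∀ s ∈ Ico (-ε) b, DifferentiableAt ℝ (fun y => Ψ y s) y) (x : ℝ) :
    pdx Ψ x t = exp (∫ s in (-ε)..t, pdx speed (Ψ x s) s) :=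
  eq_exp_integral_of_eq_one_add_integral ht.1
    ((hΨ.continuousOn_comp (continuousOn_pdx hsp) x).mono fun _ hr => ⟨hr.1, hr.2.trans_lt ht.2⟩)
    (hΨ.integrableOn_pdx_speed_mul_pdx hsp ht hbound hΨx x)
    fun _ hu => hΨ.pdx_eq_one_add_integral hsp ⟨hu.1, hu.2.trans_lt ht.2⟩
      (fun θ s hs => hbound θ s ⟨hs.1, hs.2.trans hu.2⟩) hΨx x

end Flow

def flowSpeed (w z : ℝ → ℝ → ℝ) (φ θ t : ℝ) : ℝ := (1 - φ) * w θ t + (1 / 3 + φ) * z θ t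

/-- With `c = (w - z)/2` and `D = ∂_t + λ ∂_θ`, this reads
`∂_θ λ = (2 - 2/(3φ)) ∂_θ z - 8(1-φ)/(3φ) a - ((1-φ)/φ) D c / c`;
the `∂_θ k` terms cancel in `D c`. -/
theorem flowSpeed_pdx_eq_of_euler {w z wx zx wt zt kx a φ : ℝ} (hφ : φ ≠ 0) (hc : w - z ≠ 0)
    (hw : wt + lam3 w z * wx = -(8 / 3) * a * w + 1 / 24 * (w - z) ^ 2 * kx)
    (hz : zt + lam1 w z * zx = -(8 / 3) * a * z + 1 / 24 * (w - z) ^ 2 * kx) :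
    (1 - φ) * wx + (1 / 3 + φ) * zx
      = (2 - 2 / (3 * φ)) * zx - 8 * (1 - φ) / (3 * φ) * a
        - (1 - φ) / φ * ((((1 - φ) * w + (1 / 3 + φ) * z) * wx + wt
            - (((1 - φ) * w + (1 / 3 + φ) * z) * zx + zt)) / 2 / ((w - z) / 2)) := by
  rw [lam3] at hw
  rw [lam1] at hz
  obtain rfl : wt = -(w + z / 3) * wx - 8 / 3 * a * w + 1 / 24 * (w - z) ^ 2 * kx := by linarith
  obtain rfl : zt = -(w / 3 + z) * zx - 8 / 3 * a * z + 1 / 24 * (w - z) ^ 2 * kx := by linarith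
  field_simp
  ring

section Euler

variable {w z k a Ψ : ℝ → ℝ → ℝ} {ε T φ : ℝ}

theorem contDiffOn_flowSpeed {S : Set (ℝ × ℝ)}
    (hw : ContDiffOn ℝ 1 (fun p : ℝ × ℝ => w p.1 p.2) S)
    (hz : ContDiffOn ℝ 1 (fun p : ℝ × ℝ => z p.1 p.2) S) (φ : ℝ) :
    ContDiffOn ℝ 1 (fun p : ℝ × ℝ => flowSpeed w z φ p.1 p.2) S :=
  (contDiffOn_const.mul hw).add (contDiffOn_const.mul hz)

theorem pdx_flowSpeed {t₀ t₁ : ℝ}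
    (hw : ContDiffOn ℝ 1 (fun p : ℝ × ℝ => w p.1 p.2) (univ ×ˢ Ico t₀ t₁))
    (hz : ContDiffOn ℝ 1 (fun p : ℝ × ℝ => z p.1 p.2) (univ ×ˢ Ico t₀ t₁)) (φ θ : ℝ) {s : ℝ}
    (hs : s ∈ Ico t₀ t₁) :
    pdx (flowSpeed w z φ) θ s = (1 - φ) * pdx w θ s + (1 / 3 + φ) * pdx z θ s :=
  (((hasDerivAt_pdx hw θ hs).const_mul (1 - φ)).add
    ((hasDerivAt_pdx hz θ hs).const_mul (1 / 3 + φ))).deriv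

theorem hasDerivAt_log_sub_along_flow
    (hw : ContDiffOn ℝ 1 (fun p : ℝ × ℝ => w p.1 p.2) (univ ×ˢ Ico (-ε) T))
    (hz : ContDiffOn ℝ 1 (fun p : ℝ × ℝ => z p.1 p.2) (univ ×ˢ Ico (-ε) T))
    (heuler : ∀ θ : ℝ, ∀ t ∈ Ico (-ε) T, EulerEq w z k a θ t)
    (hcpos : ∀ θ : ℝ, ∀ t ∈ Ico (-ε) T, 0 < (w θ t - z θ t) / 2) (hφ : φ ≠ 0)
    (hΨ : IsFlowOn (flowSpeed w z φ) Ψ ε (Ico (-ε) T)) (x : ℝ) {u : ℝ} (hu : u ∈ Ioo (-ε) T) :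
    HasDerivAt (fun τ => (1 - φ) / φ * log ((w (Ψ x τ) τ - z (Ψ x τ) τ) / 2))
      ((2 - 2 / (3 * φ)) * pdx z (Ψ x u) u - 8 * (1 - φ) / (3 * φ) * a (Ψ x u) u
        - pdx (flowSpeed w z φ) (Ψ x u) u) u := by
  have hu' : u ∈ Ico (-ε) T := Ioo_subset_Ico_self hu
  have hγ := hΨ.hasDerivAt x (Ico_mem_nhds hu.1 hu.2)
  have hc := hcpos (Ψ x u) u hu'
  obtain ⟨hEw, hEz, -, -⟩ := heuler (Ψ x u) u hu'
  have hsound : HasDerivAt (fun τ => (w (Ψ x τ) τ - z (Ψ x τ) τ) / 2) _ u :=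
    ((hasDerivAt_comp_curve hw hu hγ).sub (hasDerivAt_comp_curve hz hu hγ)).div_const 2
  refine ((hsound.log hc.ne').const_mul ((1 - φ) / φ)).congr_deriv ?_
  rw [pdx_flowSpeed hw hz φ _ hu', flowSpeed_pdx_eq_of_euler hφ (by linarith) hEw hEz, flowSpeed]
  ring

theorem integral_pdx_flowSpeed_along_flow
    (hw : ContDiffOn ℝ 1 (fun p : ℝ × ℝ => w p.1 p.2) (univ ×ˢ Ico (-ε) T))
    (hz : ContDiffOn ℝ 1 (fun p : ℝ × ℝ => z p.1 p.2) (univ ×ˢ Ico (-ε) T))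
    (ha : ContinuousOn (fun p : ℝ × ℝ => a p.1 p.2) (univ ×ˢ Ico (-ε) T))
    (heuler : ∀ θ : ℝ, ∀ t ∈ Ico (-ε) T, EulerEq w z k a θ t)
    (hcpos : ∀ θ : ℝ, ∀ t ∈ Ico (-ε) T, 0 < (w θ t - z θ t) / 2) (hφ : φ ≠ 0)
    (hΨ : IsFlowOn (flowSpeed w z φ) Ψ ε (Ico (-ε) T)) (x : ℝ) {t : ℝ} (ht : t ∈ Ico (-ε) T) :
    ∫ s in (-ε)..t, pdx (flowSpeed w z φ) (Ψ x s) s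
      = (1 - φ) / φ * (log ((w x (-ε) - z x (-ε)) / 2) - log ((w (Ψ x t) t - z (Ψ x t) t) / 2))
        + ∫ τ in (-ε)..t, ((2 - 2 / (3 * φ)) * pdx z (Ψ x τ) τ
            - 8 * (1 - φ) / (3 * φ) * a (Ψ x τ) τ) := by
  have hsub : Icc (-ε) t ⊆ Ico (-ε) T := fun r hr => ⟨hr.1, hr.2.trans_lt ht.2⟩
  have hm : ContinuousOn (fun s => pdx (flowSpeed w z φ) (Ψ x s) s) (Icc (-ε) t) :=
    (hΨ.continuousOn_comp (continuousOn_pdx (contDiffOn_flowSpeed hw hz φ)) x).mono hsub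
  have hg : ContinuousOn (fun τ => (2 - 2 / (3 * φ)) * pdx z (Ψ x τ) τ
      - 8 * (1 - φ) / (3 * φ) * a (Ψ x τ) τ) (Icc (-ε) t) :=
    ((continuousOn_const.mul (hΨ.continuousOn_comp (continuousOn_pdx hz) x)).sub
      (continuousOn_const.mul (hΨ.continuousOn_comp ha x))).mono hsub
  have hsound : ContinuousOn (fun p : ℝ × ℝ => (w p.1 p.2 - z p.1 p.2) / 2) (univ ×ˢ Ico (-ε) T) :=
    ((hw.sub hz).div_const 2).continuousOn
  have hlog : ContinuousOn (fun τ => (1 - φ) / φ * log ((w (Ψ x τ) τ - z (Ψ x τ) τ) / 2))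
      (Icc (-ε) t) :=
    continuousOn_const.mul
      (((hΨ.continuousOn_comp (g := fun θ s => (w θ s - z θ s) / 2) hsound x).mono hsub).log
      fun s hs => (hcpos _ s (hsub hs)).ne')
  have hFTC := intervalIntegral.integral_eq_sub_of_hasDerivAt_of_le ht.1 hlog
    (fun u hu => hasDerivAt_log_sub_along_flow hw hz heuler hcpos hφ hΨ x ⟨hu.1, hu.2.trans ht.2⟩)
    ((hg.sub hm).intervalIntegrable_of_Icc ht.1)
  rw [intervalIntegral.integral_sub (hg.intervalIntegrable_of_Icc ht.1)
    (hm.intervalIntegrable_of_Icc ht.1), hΨ.1] at hFTC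
  linarith

end Euler

theorem flow_derivative_formula_general
    (ε T : ℝ)
    (w z k a : ℝ → ℝ → ℝ)
    (hw : ContDiffOn ℝ 1 (fun p : ℝ × ℝ => w p.1 p.2) (univ ×ˢ Ico (-ε) T))
    (hz : ContDiffOn ℝ 1 (fun p : ℝ × ℝ => z p.1 p.2) (univ ×ˢ Ico (-ε) T))
    (ha : ContDiffOn ℝ 1 (fun p : ℝ × ℝ => a p.1 p.2) (univ ×ˢ Ico (-ε) T))
    (hwper : ∀ θ t : ℝ, w (θ + 2 * π) t = w θ t)
    (hzper : ∀ θ t : ℝ, z (θ + 2 * π) t = z θ t)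
    (heuler : ∀ θ : ℝ, ∀ t ∈ Ico (-ε) T, EulerEq w z k a θ t)
    (hcpos : ∀ θ : ℝ, ∀ t ∈ Ico (-ε) T, 0 < (w θ t - z θ t) / 2)
    (φ : ℝ) (hφ : 0 < φ)
    (Ψ : ℝ → ℝ → ℝ)
    (hΨ : IsFlowOn (fun θ t => (1 - φ) * w θ t + (1 / 3 + φ) * z θ t) Ψ ε (Ico (-ε) T))
    (hΨx : ∀ x : ℝ, ∀ t ∈ Ico (-ε) T, DifferentiableAt ℝ (fun y => Ψ y t) x) :
    ∀ x : ℝ, ∀ t ∈ Ico (-ε) T,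
      pdx Ψ x t
        = ((w x (-ε) - z x (-ε)) / 2 / ((w (Ψ x t) t - z (Ψ x t) t) / 2)) ^ ((1 - φ) / φ)
            * Real.exp (∫ τ in (-ε)..t,
                ((2 - 2 / (3 * φ)) * pdx z (Ψ x τ) τ
                  - 8 * (1 - φ) / (3 * φ) * a (Ψ x τ) τ)) := by
  intro x t ht
  have hflow : IsFlowOn (flowSpeed w z φ) Ψ ε (Ico (-ε) T) := hΨ
  have hspeed := contDiffOn_flowSpeed hw hz φ
  obtain ⟨L, hL⟩ := exists_abs_pdx_le_of_periodic hspeed two_pi_pos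
    (fun θ s => by simp only [flowSpeed, hwper, hzper]) ht.2
  have hc₀ := hcpos x (-ε) ⟨le_rfl, ht.1.trans_lt ht.2⟩
  have hc := hcpos (Ψ x t) t ht
  rw [hflow.pdx_eq_exp_integral hspeed ht hL hΨx x,
    integral_pdx_flowSpeed_along_flow hw hz ha.continuousOn heuler hcpos hφ.ne' hflow x ht,
    exp_add, rpow_def_of_pos (div_pos hc₀ hc), log_div hc₀.ne' hc.ne', mul_comm (log _ - log _)]

/-- Explicit formula for the spatial derivative of the flow of
`λ = (1−φ)w + (1/3+φ)z`. -/
theorem flow_derivative_formula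
    (ε T : ℝ) (hT : -ε < T)
    (w z k a : ℝ → ℝ → ℝ)
    (hw : ContDiffOn ℝ 1 (fun p : ℝ × ℝ => w p.1 p.2) (univ ×ˢ Ico (-ε) T))
    (hz : ContDiffOn ℝ 1 (fun p : ℝ × ℝ => z p.1 p.2) (univ ×ˢ Ico (-ε) T))
    (hk : ContDiffOn ℝ 1 (fun p : ℝ × ℝ => k p.1 p.2) (univ ×ˢ Ico (-ε) T))
    (ha : ContDiffOn ℝ 1 (fun p : ℝ × ℝ => a p.1 p.2) (univ ×ˢ Ico (-ε) T))
    (hwper : ∀ θ t : ℝ, w (θ + 2 * π) t = w θ t)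
    (hzper : ∀ θ t : ℝ, z (θ + 2 * π) t = z θ t)
    (hkper : ∀ θ t : ℝ, k (θ + 2 * π) t = k θ t)
    (haper : ∀ θ t : ℝ, a (θ + 2 * π) t = a θ t)
    (heuler : ∀ θ : ℝ, ∀ t ∈ Ico (-ε) T, EulerEq w z k a θ t)
    (hcpos : ∀ θ : ℝ, ∀ t ∈ Ico (-ε) T, 0 < (w θ t - z θ t) / 2)
    (φ : ℝ) (hφ : 0 < φ)
    (Ψ : ℝ → ℝ → ℝ)
    (hΨ : IsFlowOn (fun θ t => (1 - φ) * w θ t + (1 / 3 + φ) * z θ t) Ψ ε (Ico (-ε) T))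
    (hΨx : ∀ x : ℝ, ∀ t ∈ Ico (-ε) T, DifferentiableAt ℝ (fun y => Ψ y t) x) :
    ∀ x : ℝ, ∀ t ∈ Ico (-ε) T,
      pdx Ψ x t
        = ((w x (-ε) - z x (-ε)) / 2 / ((w (Ψ x t) t - z (Ψ x t) t) / 2)) ^ ((1 - φ) / φ)
            * Real.exp (∫ τ in (-ε)..t,
                ((2 - 2 / (3 * φ)) * pdx z (Ψ x τ) τ
                  - 8 * (1 - φ) / (3 * φ) * a (Ψ x τ) τ)) :=
  flow_derivative_formula_general ε T w z k a hw hz ha hwper hzper heuler hcpos φ hφ Ψ hΨ hΨx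
end
end
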